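/- Let K be the unique nonempty compact subset of ℝ satisfying 3·K = K ∪ (K + 2) (the classical middle-thirds Cantor set). Then H^s(K) = 1, where s = log 2/log 3 and H^s denotes the s-dimensional Hausdorff measure on ℝ. -/

import Mathlib

/-!
Upper bound: `K` is covered by its `2ⁿ` images under the `n`-fold compositions of `x ↦ x / 3`
and `x ↦ (x + 2) / 3`, each of diameter at most `3⁻ⁿ`, and `2ⁿ (3⁻ⁿ)ˢ = 1`.

Lower bound, by the mass distribution principle: the image `μ` of Lebesgue measure on `[0, 1)`
under the map turning binary digits `0, 1` into ternary digits `0, 2` is a probability measure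
on `K` with `μ = ½ ∑_b (cantorBranch b)_* μ`. Self-similarity, the gap `(1/3, 2/3)` in `K` and
concavity of `t ↦ tˢ` show that an additive error in `μ [u, v] ≤ (v - u)ˢ` (`u ≤ v` in `K`) can
always be halved, first for intervals ending at `0` or `1`, then for all. Hence
`μ U ≤ (diam U)ˢ` for every `U`, and `H^s(K) ≥ μ K = 1`.
-/

open MeasureTheory Set Filter Topology
open scoped ENNReal

lemma forall_le_of_halving_error {α : Type*} {S : Set α} {a b : α → ℝ}
    (hone : ∀ x ∈ S, a x ≤ b x + 1)
    (hhalf : ∀ ε ≥ 0, (∀ x ∈ S, a x ≤ b x + ε) → ∀ x ∈ S, a x ≤ b x + ε / 2) :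
    ∀ x ∈ S, a x ≤ b x := by
  have hpow (N : ℕ) : ∀ x ∈ S, a x ≤ b x + (1 / 2) ^ N := by
    induction N with
    | zero => simpa using hone
    | succ N ih => simpa [pow_succ, div_eq_mul_inv, mul_assoc] using hhalf _ (by positivity) ih
  intro x hx
  refine le_of_forall_pos_lt_add fun ε hε => ?_
  obtain ⟨N, hN⟩ := exists_pow_lt_of_lt_one hε (by norm_num : (1 / 2 : ℝ) < 1)
  linarith [hpow N x hx]

noncomputable def cantorBranch (b : Bool) (x : ℝ) : ℝ := (x + if b then 2 else 0) / 3

lemma measurable_cantorBranch (b : Bool) : Measurable (cantorBranch b) := by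
  unfold cantorBranch; fun_prop

lemma lipschitzWith_cantorBranch (b : Bool) : LipschitzWith 3⁻¹ (cantorBranch b) := by
  refine LipschitzWith.of_dist_le_mul fun x y => le_of_eq ?_
  simp only [cantorBranch, Real.dist_eq, ← sub_div, add_sub_add_right_eq_sub, abs_div]
  norm_num [div_eq_inv_mul]

noncomputable def cantorPiece (K : Set ℝ) : (n : ℕ) → (Fin n → Bool) → Set ℝ
  | 0, _ => K
  | n + 1, w => cantorBranch (w 0) '' cantorPiece K n (Fin.tail w)

structure IsCantorAttractor (K : Set ℝ) : Prop where
  isCompact : IsCompact K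
  nonempty : K.Nonempty
  image_three_mul : (fun x => (3 : ℝ) * x) '' K = K ∪ (fun x => x + 2) '' K

namespace IsCantorAttractor

variable {K : Set ℝ} (hK : IsCantorAttractor K) {x : ℝ}
include hK

lemma isClosed : IsClosed K := hK.isCompact.isClosed

lemma cantorBranch_mem (b : Bool) (hx : x ∈ K) : cantorBranch b x ∈ K := by
  obtain ⟨y, hy, hxy⟩ : cantorBranch b x * 3 ∈ (fun x => (3 : ℝ) * x) '' K := by
    rw [hK.image_three_mul]
    cases b
    · exact Or.inl (by simpa [cantorBranch] using hx)
    · exact Or.inr ⟨x, hx, by simp [cantorBranch]⟩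
  have : y = cantorBranch b x := by linarith [hxy]
  exact this ▸ hy

lemma three_mul_mem_or (hx : x ∈ K) : 3 * x ∈ K ∨ 3 * x - 2 ∈ K := by
  obtain hx | ⟨y, hy, hxy⟩ : 3 * x ∈ K ∪ (fun x => x + 2) '' K :=
    hK.image_three_mul ▸ mem_image_of_mem _ hx
  · exact Or.inl hx
  · exact Or.inr (by rwa [← hxy, add_sub_cancel_right])

lemma subset_Icc : K ⊆ Icc 0 1 := by
  obtain ⟨M, hMK, hM⟩ := hK.isCompact.exists_isGreatest hK.nonempty
  obtain ⟨m, hmK, hm⟩ := hK.isCompact.exists_isLeast hK.nonempty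
  have hM1 : M ≤ 1 := by
    rcases hK.three_mul_mem_or hMK with h | h <;> linarith [hM h, hm hMK, hM hmK]
  have hm0 : 0 ≤ m := by
    rcases hK.three_mul_mem_or hmK with h | h <;> linarith [hm h, hm hMK, hM hmK]
  exact fun y hy => ⟨hm0.trans (hm hy), (hM hy).trans hM1⟩

lemma le_third_or_two_thirds_le (hx : x ∈ K) : x ≤ 1 / 3 ∨ 2 / 3 ≤ x := by
  rcases hK.three_mul_mem_or hx with h | h
  · exact Or.inl (by linarith [(hK.subset_Icc h).2])
  · exact Or.inr (by linarith [(hK.subset_Icc h).1])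

lemma three_mul_mem (hx : x ∈ K) (h : x ≤ 1 / 3) : 3 * x ∈ K :=
  (hK.three_mul_mem_or hx).resolve_right fun h' => by linarith [(hK.subset_Icc h').1]

lemma three_mul_sub_two_mem (hx : x ∈ K) (h : 2 / 3 ≤ x) : 3 * x - 2 ∈ K :=
  (hK.three_mul_mem_or hx).resolve_left fun h' => by linarith [(hK.subset_Icc h').2]

lemma subset_iUnion_image_cantorBranch : K ⊆ ⋃ b, cantorBranch b '' K := by
  intro x hx
  rcases hK.three_mul_mem_or hx with h | h
  · exact mem_iUnion.2 ⟨false, 3 * x, h, by simp [cantorBranch]⟩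
  · exact mem_iUnion.2 ⟨true, 3 * x - 2, h, by simp [cantorBranch]⟩

lemma subset_iUnion_cantorPiece (n : ℕ) : K ⊆ ⋃ w, cantorPiece K n w := by
  induction n with
  | zero => exact fun x hx => mem_iUnion.2 ⟨Fin.elim0, hx⟩
  | succ n ih =>
    intro x hx
    obtain ⟨b, y, hy, rfl⟩ := mem_iUnion.1 (hK.subset_iUnion_image_cantorBranch hx)
    obtain ⟨w, hyw⟩ := mem_iUnion.1 (ih hy)
    exact mem_iUnion.2 ⟨Fin.cons b w, by simpa [cantorPiece] using mem_image_of_mem _ hyw⟩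

lemma ediam_cantorPiece_le (n : ℕ) (w : Fin n → Bool) :
    Metric.ediam (cantorPiece K n w) ≤ 3⁻¹ ^ n := by
  induction n with
  | zero => simpa [cantorPiece] using (Metric.ediam_mono hK.subset_Icc).trans (by simp)
  | succ n ih =>
    calc Metric.ediam (cantorPiece K (n + 1) w)
        ≤ 3⁻¹ * Metric.ediam (cantorPiece K n (Fin.tail w)) := by
          simpa [cantorPiece] using (lipschitzWith_cantorBranch (w 0)).ediam_image_le _
      _ ≤ 3⁻¹ ^ (n + 1) := by rw [pow_succ']; gcongr; exact ih _

end IsCantorAttractor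

section Exponent

variable {s : ℝ} (h3s : (3 : ℝ) ^ s = 2)
include h3s

lemma nonneg_of_three_rpow_eq_two : 0 ≤ s := by
  by_contra! hs
  linarith [Real.rpow_lt_one_of_one_lt_of_neg (by norm_num : (1 : ℝ) < 3) hs]

lemma le_one_of_three_rpow_eq_two : s ≤ 1 := by
  by_contra! hs
  linarith [Real.rpow_lt_rpow_of_exponent_lt (by norm_num : (1 : ℝ) < 3) hs, Real.rpow_one (3 : ℝ)]

lemma three_mul_rpow_of_three_rpow_eq_two {t : ℝ} (ht : 0 ≤ t) : (3 * t) ^ s = 2 * t ^ s := by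
  rw [Real.mul_rpow (by norm_num) ht, h3s]

end Exponent

lemma rpow_add_rpow_le_of_gap {s : ℝ} (hs0 : 0 ≤ s) (hs1 : s ≤ 1) {u v : ℝ} (hu0 : 0 ≤ u)
    (hu : u ≤ 1 / 3) (hv : 2 / 3 ≤ v) (hv1 : v ≤ 1) :
    (1 - 3 * u) ^ s + (3 * v - 2) ^ s ≤ 2 * (v - u) ^ s := by
  have hconcave := (Real.concaveOn_rpow hs0 hs1).2 (mem_Ici.2 (by linarith : 0 ≤ 1 - 3 * u))
    (mem_Ici.2 (by linarith : 0 ≤ 3 * v - 2)) (by norm_num : (0 : ℝ) ≤ 1 / 2)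
    (by norm_num : (0 : ℝ) ≤ 1 / 2) (by norm_num)
  have hmono : (1 / 2 * (1 - 3 * u) + 1 / 2 * (3 * v - 2)) ^ s ≤ (v - u) ^ s :=
    Real.rpow_le_rpow (by linarith) (by linarith) hs0
  simp only [smul_eq_mul] at hconcave
  linarith

namespace IsCantorAttractor

variable {K : Set ℝ} (hK : IsCantorAttractor K) {s : ℝ} (h3s : (3 : ℝ) ^ s = 2)
include hK h3s

lemma hausdorffMeasure_le_one : μH[s] K ≤ 1 := by
  have hs0 := nonneg_of_three_rpow_eq_two h3s
  have hpow (n : ℕ) : ((3 : ℝ≥0∞)⁻¹ ^ n) ^ s = 2⁻¹ ^ n := by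
    have h3 : (3 : ℝ≥0∞) ^ s = 2 := by
      rw [← ENNReal.ofReal_ofNat 3, ENNReal.ofReal_rpow_of_pos (by norm_num), h3s,
        ENNReal.ofReal_ofNat]
    rw [← ENNReal.rpow_natCast, ← ENNReal.rpow_mul, mul_comm, ENNReal.rpow_mul,
      ENNReal.rpow_natCast, ENNReal.inv_rpow, h3]
  have hsum (n : ℕ) : ∑ w, Metric.ediam (cantorPiece K n w) ^ s ≤ 1 := by
    calc ∑ w, Metric.ediam (cantorPiece K n w) ^ s ≤ ∑ _w : Fin n → Bool, ((3 : ℝ≥0∞)⁻¹ ^ n) ^ s :=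
          Finset.sum_le_sum fun w _ => by gcongr; exact hK.ediam_cantorPiece_le n w
      _ = ∑ _w : Fin n → Bool, (2⁻¹ : ℝ≥0∞) ^ n := by simp only [hpow]
      _ = 1 := by
          simp [← mul_pow, ENNReal.mul_inv_cancel two_ne_zero ENNReal.ofNat_ne_top]
  calc μH[s] K ≤ liminf (fun n => ∑ w, Metric.ediam (cantorPiece K n w) ^ s) atTop :=
        Measure.hausdorffMeasure_le_liminf_sum s K (fun n => 3⁻¹ ^ n)
          (ENNReal.tendsto_pow_atTop_nhds_zero_of_lt_one (by norm_num)) (cantorPiece K)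
          (Eventually.of_forall hK.ediam_cantorPiece_le)
          (Eventually.of_forall hK.subset_iUnion_cantorPiece)
    _ ≤ 1 := liminf_le_of_frequently_le' (Frequently.of_forall hsum)

end IsCantorAttractor

noncomputable def binaryBranch (b : Bool) (x : ℝ) : ℝ := (x + if b then 1 else 0) / 2

-- The `(n+1)`-st binary digit of `x` after the point.
noncomputable def binaryDigit (n : ℕ) (x : ℝ) : Bool := 2⁻¹ ≤ Int.fract (2 ^ n * x)

lemma binaryDigit_succ (n : ℕ) (x : ℝ) : binaryDigit (n + 1) x = binaryDigit n (2 * x) := by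
  rw [binaryDigit, binaryDigit, pow_succ, mul_assoc]

lemma binaryDigit_add_one (n : ℕ) (x : ℝ) : binaryDigit n (x + 1) = binaryDigit n x := by
  have : (2 : ℝ) ^ n * (x + 1) = 2 ^ n * x + (2 ^ n : ℕ) := by push_cast; ring
  rw [binaryDigit, binaryDigit, this, Int.fract_add_natCast]

lemma binaryDigit_zero_binaryBranch (b : Bool) {x : ℝ} (hx : x ∈ Ico 0 1) :
    binaryDigit 0 (binaryBranch b x) = b := by
  obtain ⟨hx0, hx1⟩ := hx
  have hfract : Int.fract (binaryBranch b x) = binaryBranch b x := by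
    rw [Int.fract_eq_self]
    cases b <;> constructor <;> simp [binaryBranch] <;> linarith
  rw [binaryDigit, pow_zero, one_mul, hfract]
  cases b <;> simp [binaryBranch] <;> linarith

noncomputable def cantorTerm (x : ℝ) (n : ℕ) : ℝ := (if binaryDigit n x then 2 else 0) / 3 ^ (n + 1)

-- On `[0, 1)`, a right inverse of the Cantor function.
noncomputable def cantorMap (x : ℝ) : ℝ := ∑' n, cantorTerm x n

lemma cantorTerm_succ (x : ℝ) (n : ℕ) : cantorTerm x (n + 1) = cantorTerm (2 * x) n / 3 := by
  rw [cantorTerm, cantorTerm, binaryDigit_succ, pow_succ, div_div]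

lemma summable_cantorTerm (x : ℝ) : Summable (cantorTerm x) := by
  refine Summable.of_nonneg_of_le (fun n => by unfold cantorTerm; positivity) (fun n => ?_)
    ((summable_geometric_of_lt_one (by norm_num : (0 : ℝ) ≤ 3⁻¹) (by norm_num)).mul_left 2)
  rw [cantorTerm, inv_pow, ← div_eq_mul_inv]
  split_ifs <;> gcongr <;> norm_num

lemma measurable_cantorMap : Measurable cantorMap := by
  refine measurable_of_tendsto_metrizable (fun N => ?_)
    (tendsto_pi_nhds.2 fun x => (summable_cantorTerm x).hasSum.tendsto_sum_nat)
  refine Finset.measurable_sum _ fun n _ => Measurable.div_const ?_ _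
  refine Measurable.ite ?_ measurable_const measurable_const
  simp only [binaryDigit, decide_eq_true_eq]
  exact measurableSet_le measurable_const (measurable_fract.comp (measurable_const_mul _))

lemma cantorMap_eq_cantorBranch (x : ℝ) :
    cantorMap x = cantorBranch (binaryDigit 0 x) (cantorMap (2 * x)) := by
  simp only [cantorMap, (summable_cantorTerm x).tsum_eq_zero_add, cantorTerm_succ, tsum_div_const]
  rw [cantorBranch, cantorTerm, zero_add, pow_one]
  ring

lemma cantorMap_add_one (x : ℝ) : cantorMap (x + 1) = cantorMap x := by
  simp only [cantorMap, cantorTerm, binaryDigit_add_one]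

lemma cantorMap_binaryBranch (b : Bool) {x : ℝ} (hx : x ∈ Ico 0 1) :
    cantorMap (binaryBranch b x) = cantorBranch b (cantorMap x) := by
  rw [cantorMap_eq_cantorBranch, binaryDigit_zero_binaryBranch b hx]
  cases b
  · simp [binaryBranch, mul_div_cancel₀]
  · simp [binaryBranch, mul_div_cancel₀, cantorMap_add_one]

lemma sum_range_succ_cantorTerm_add (N : ℕ) (x z : ℝ) :
    ∑ n ∈ Finset.range (N + 1), cantorTerm x n + z / 3 ^ (N + 1)
      = cantorBranch (binaryDigit 0 x)
          (∑ n ∈ Finset.range N, cantorTerm (2 * x) n + z / 3 ^ N) := by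
  simp only [Finset.sum_range_succ', cantorTerm_succ, ← Finset.sum_div]
  rw [cantorBranch, cantorTerm, zero_add, pow_one, pow_succ]
  ring

lemma IsCantorAttractor.cantorMap_mem {K : Set ℝ} (hK : IsCantorAttractor K) (x : ℝ) :
    cantorMap x ∈ K := by
  obtain ⟨z, hz⟩ := hK.nonempty
  have hpartial (N : ℕ) : ∀ x, ∑ n ∈ Finset.range N, cantorTerm x n + z / 3 ^ N ∈ K := by
    induction N with
    | zero => simpa using hz
    | succ N ih => exact fun x => sum_range_succ_cantorTerm_add N x z ▸ hK.cantorBranch_mem _ (ih _)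
  have hlim : Tendsto (fun N : ℕ => z / 3 ^ N) atTop (𝓝 0) :=
    tendsto_const_nhds.div_atTop (tendsto_pow_atTop_atTop_of_one_lt (by norm_num))
  have hconv := (summable_cantorTerm x).hasSum.tendsto_sum_nat.add hlim
  rw [add_zero] at hconv
  exact hK.isClosed.mem_of_tendsto hconv (Eventually.of_forall fun N => hpartial N x)

noncomputable def cantorMeasure : Measure ℝ := (volume.restrict (Ico 0 1)).map cantorMap

instance : IsProbabilityMeasure cantorMeasure :=
  have : IsProbabilityMeasure (volume.restrict (Ico (0 : ℝ) 1)) := ⟨by simp⟩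
  Measure.isProbabilityMeasure_map measurable_cantorMap.aemeasurable

lemma IsCantorAttractor.cantorMeasure_compl {K : Set ℝ} (hK : IsCantorAttractor K) :
    cantorMeasure Kᶜ = 0 := by
  rw [cantorMeasure, Measure.map_apply measurable_cantorMap hK.isClosed.measurableSet.compl]
  exact measure_mono_null (fun x hx => absurd (hK.cantorMap_mem x) hx) measure_empty

lemma measurable_binaryBranch (b : Bool) : Measurable (binaryBranch b) := by
  unfold binaryBranch; fun_prop

lemma map_binaryBranch_volume (b : Bool) : volume.map (binaryBranch b) = (2 : ℝ≥0∞) • volume := by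
  have : binaryBranch b = (2⁻¹ * ·) ∘ (· + if b then 1 else 0) := by
    ext x; simp only [binaryBranch, Function.comp_apply]; ring
  rw [this, ← Measure.map_map (measurable_const_mul _) (measurable_add_const _),
    map_add_right_eq_self, Real.map_volume_mul_left (by norm_num)]
  norm_num

lemma map_binaryBranch_volume_restrict (b : Bool) :
    (volume.restrict (Ico (0 : ℝ) 1)).map (binaryBranch b)
      = (2 : ℝ≥0∞) • volume.restrict (Ico (binaryBranch b 0) (binaryBranch b 1)) := by
  have hpre : binaryBranch b ⁻¹' Ico (binaryBranch b 0) (binaryBranch b 1) = Ico 0 1 := by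
    ext x; simp only [binaryBranch, mem_preimage, mem_Ico]
    constructor <;> rintro ⟨h0, h1⟩ <;> constructor <;> linarith
  rw [← hpre, ← Measure.restrict_map (measurable_binaryBranch b) measurableSet_Ico,
    map_binaryBranch_volume, Measure.restrict_smul]

lemma volume_restrict_Ico_zero_one :
    volume.restrict (Ico (0 : ℝ) 1)
      = (2⁻¹ : ℝ≥0∞) • ∑ b, (volume.restrict (Ico (0 : ℝ) 1)).map (binaryBranch b) := by
  simp only [map_binaryBranch_volume_restrict, ← Finset.smul_sum, smul_smul, Fintype.sum_bool]
  have hfalse : Ico (binaryBranch false 0) (binaryBranch false 1) = Ico 0 2⁻¹ := by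
    norm_num [binaryBranch]
  have htrue : Ico (binaryBranch true 0) (binaryBranch true 1) = Ico 2⁻¹ 1 := by
    norm_num [binaryBranch]
  rw [ENNReal.inv_mul_cancel two_ne_zero ENNReal.ofNat_ne_top, one_smul, hfalse, htrue, add_comm,
    ← Measure.restrict_union Ico_disjoint_Ico_same measurableSet_Ico,
    Ico_union_Ico_eq_Ico (by norm_num) (by norm_num)]

lemma cantorMeasure_eq_sum_map :
    cantorMeasure = (2⁻¹ : ℝ≥0∞) • ∑ b, cantorMeasure.map (cantorBranch b) := by
  have hcongr (b : Bool) : cantorMap ∘ binaryBranch b =ᵐ[volume.restrict (Ico (0 : ℝ) 1)]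
      cantorBranch b ∘ cantorMap :=
    ae_restrict_of_forall_mem measurableSet_Ico fun x hx => cantorMap_binaryBranch b hx
  have hmap (b : Bool) : ((volume.restrict (Ico (0 : ℝ) 1)).map (binaryBranch b)).map cantorMap
      = cantorMeasure.map (cantorBranch b) := by
    rw [Measure.map_map measurable_cantorMap (measurable_binaryBranch b),
      Measure.map_congr (hcongr b), cantorMeasure,
      Measure.map_map (measurable_cantorBranch b) measurable_cantorMap]
  conv_lhs => rw [cantorMeasure, volume_restrict_Ico_zero_one]
  simp only [Fintype.sum_bool, Measure.map_smul, Measure.map_add _ _ measurable_cantorMap, hmap]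

lemma cantorMeasure_real_Icc (u v : ℝ) :
    cantorMeasure.real (Icc u v)
      = (cantorMeasure.real (Icc (3 * u) (3 * v))
          + cantorMeasure.real (Icc (3 * u - 2) (3 * v - 2))) / 2 := by
  have hpre (b : Bool) : cantorBranch b ⁻¹' Icc u v
      = Icc (3 * u - if b then 2 else 0) (3 * v - if b then 2 else 0) := by
    ext x; simp only [cantorBranch, mem_preimage, mem_Icc]
    constructor <;> rintro ⟨h0, h1⟩ <;> constructor <;> linarith
  conv_lhs => rw [cantorMeasure_eq_sum_map]
  rw [Fintype.sum_bool, measureReal_ennreal_smul_apply, measureReal_add_apply,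
    map_measureReal_apply (measurable_cantorBranch _) measurableSet_Icc,
    map_measureReal_apply (measurable_cantorBranch _) measurableSet_Icc, hpre, hpre]
  norm_num
  ring

namespace IsCantorAttractor

variable {K : Set ℝ} (hK : IsCantorAttractor K)
include hK

lemma cantorMeasure_real_le_of_inter_subset {t u : Set ℝ} (h : t ∩ K ⊆ u) :
    cantorMeasure.real t ≤ cantorMeasure.real u := by
  calc cantorMeasure.real t = cantorMeasure.real (t ∩ K) := by
        rw [Measure.real, Measure.real, measure_inter_conull hK.cantorMeasure_compl]
    _ ≤ cantorMeasure.real u := measureReal_mono h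

lemma cantorMeasure_real_Icc_of_le_third {u v : ℝ} (hv : v ≤ 1 / 3) :
    cantorMeasure.real (Icc u v) = cantorMeasure.real (Icc (3 * u) (3 * v)) / 2 := by
  have hnull : cantorMeasure.real (Icc (3 * u - 2) (3 * v - 2)) = 0 := by
    refine le_antisymm ?_ measureReal_nonneg
    simpa using hK.cantorMeasure_real_le_of_inter_subset (u := ∅)
      fun x ⟨hx, hxK⟩ => by linarith [hx.2, (hK.subset_Icc hxK).1]
  rw [cantorMeasure_real_Icc, hnull, add_zero]

lemma cantorMeasure_real_Icc_of_two_thirds_le {u v : ℝ} (hu : 2 / 3 ≤ u) :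
    cantorMeasure.real (Icc u v) = cantorMeasure.real (Icc (3 * u - 2) (3 * v - 2)) / 2 := by
  have hnull : cantorMeasure.real (Icc (3 * u) (3 * v)) = 0 := by
    refine le_antisymm ?_ measureReal_nonneg
    simpa using hK.cantorMeasure_real_le_of_inter_subset (u := ∅)
      fun x ⟨hx, hxK⟩ => by linarith [hx.1, (hK.subset_Icc hxK).2]
  rw [cantorMeasure_real_Icc, hnull, zero_add]

lemma cantorMeasure_real_Icc_le (u v : ℝ) :
    cantorMeasure.real (Icc u v)
      ≤ (cantorMeasure.real (Icc (3 * u) 1) + cantorMeasure.real (Icc 0 (3 * v - 2))) / 2 := by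
  have hleft : cantorMeasure.real (Icc (3 * u) (3 * v)) ≤ cantorMeasure.real (Icc (3 * u) 1) :=
    hK.cantorMeasure_real_le_of_inter_subset fun x ⟨hx, hxK⟩ => ⟨hx.1, (hK.subset_Icc hxK).2⟩
  have hright : cantorMeasure.real (Icc (3 * u - 2) (3 * v - 2))
      ≤ cantorMeasure.real (Icc 0 (3 * v - 2)) :=
    hK.cantorMeasure_real_le_of_inter_subset fun x ⟨hx, hxK⟩ => ⟨(hK.subset_Icc hxK).1, hx.2⟩
  rw [cantorMeasure_real_Icc]
  gcongr

variable {s : ℝ} (h3s : (3 : ℝ) ^ s = 2)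
include h3s

lemma cantorMeasure_real_Icc_one_le {w : ℝ} (hw : w ∈ K) :
    cantorMeasure.real (Icc w 1) ≤ (1 - w) ^ s := by
  have hs0 := nonneg_of_three_rpow_eq_two h3s
  refine forall_le_of_halving_error (a := fun w => cantorMeasure.real (Icc w 1))
    (b := fun w => (1 - w) ^ s) (fun w hw => ?_) (fun ε _ ih w hw => ?_) w hw
  · linarith [measureReal_le_one (μ := cantorMeasure) (s := Icc w 1),
      Real.rpow_nonneg (by linarith [(hK.subset_Icc hw).2] : 0 ≤ 1 - w) s]
  obtain ⟨hw0, hw1⟩ := hK.subset_Icc hw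
  rcases hK.le_third_or_two_thirds_le hw with h | h
  · have hgap := rpow_add_rpow_le_of_gap hs0 (le_one_of_three_rpow_eq_two h3s) hw0 h
      (by norm_num : (2 : ℝ) / 3 ≤ 1) le_rfl
    norm_num at hgap
    calc cantorMeasure.real (Icc w 1)
        ≤ (cantorMeasure.real (Icc (3 * w) 1) + cantorMeasure.real (Icc 0 (3 * 1 - 2))) / 2 :=
          hK.cantorMeasure_real_Icc_le w 1
      _ ≤ ((1 - 3 * w) ^ s + ε + 1) / 2 := by
          gcongr
          · exact ih _ (hK.three_mul_mem hw h)
          · exact measureReal_le_one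
      _ ≤ (1 - w) ^ s + ε / 2 := by linarith
  · calc cantorMeasure.real (Icc w 1) = cantorMeasure.real (Icc (3 * w - 2) 1) / 2 := by
          rw [hK.cantorMeasure_real_Icc_of_two_thirds_le h]; norm_num
      _ ≤ ((1 - (3 * w - 2)) ^ s + ε) / 2 := by
          gcongr; exact ih _ (hK.three_mul_sub_two_mem hw h)
      _ = (1 - w) ^ s + ε / 2 := by
          rw [show 1 - (3 * w - 2) = 3 * (1 - w) by ring,
            three_mul_rpow_of_three_rpow_eq_two h3s (by linarith)]
          ring

lemma cantorMeasure_real_zero_Icc_le {w : ℝ} (hw : w ∈ K) :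
    cantorMeasure.real (Icc 0 w) ≤ w ^ s := by
  have hs0 := nonneg_of_three_rpow_eq_two h3s
  refine forall_le_of_halving_error (a := fun w => cantorMeasure.real (Icc 0 w))
    (b := fun w => w ^ s) (fun w hw => ?_) (fun ε _ ih w hw => ?_) w hw
  · linarith [measureReal_le_one (μ := cantorMeasure) (s := Icc 0 w),
      Real.rpow_nonneg (hK.subset_Icc hw).1 s]
  obtain ⟨hw0, hw1⟩ := hK.subset_Icc hw
  rcases hK.le_third_or_two_thirds_le hw with h | h
  · calc cantorMeasure.real (Icc 0 w) = cantorMeasure.real (Icc 0 (3 * w)) / 2 := by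
          rw [hK.cantorMeasure_real_Icc_of_le_third h]; norm_num
      _ ≤ ((3 * w) ^ s + ε) / 2 := by
          gcongr; exact ih _ (hK.three_mul_mem hw h)
      _ = w ^ s + ε / 2 := by
          rw [three_mul_rpow_of_three_rpow_eq_two h3s hw0]
          ring
  · have hgap := rpow_add_rpow_le_of_gap hs0 (le_one_of_three_rpow_eq_two h3s) le_rfl
      (by norm_num) h hw1
    norm_num at hgap
    calc cantorMeasure.real (Icc 0 w)
        ≤ (cantorMeasure.real (Icc (3 * 0) 1) + cantorMeasure.real (Icc 0 (3 * w - 2))) / 2 :=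
          hK.cantorMeasure_real_Icc_le 0 w
      _ ≤ (1 + ((3 * w - 2) ^ s + ε)) / 2 := by
          gcongr
          · exact measureReal_le_one
          · exact ih _ (hK.three_mul_sub_two_mem hw h)
      _ ≤ w ^ s + ε / 2 := by linarith

lemma cantorMeasure_real_Icc_le_rpow_add_half {ε : ℝ} (hε : 0 ≤ ε)
    (ih : ∀ u ∈ K, ∀ v ∈ K, u ≤ v → cantorMeasure.real (Icc u v) ≤ (v - u) ^ s + ε)
    {u v : ℝ} (hu : u ∈ K) (hv : v ∈ K) (huv : u ≤ v) :
    cantorMeasure.real (Icc u v) ≤ (v - u) ^ s + ε / 2 := by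
  obtain ⟨hu0, hu1⟩ := hK.subset_Icc hu
  obtain ⟨hv0, hv1⟩ := hK.subset_Icc hv
  have hscale : (3 * v - 3 * u) ^ s = 2 * (v - u) ^ s := by
    rw [← mul_sub, three_mul_rpow_of_three_rpow_eq_two h3s (by linarith)]
  rcases hK.le_third_or_two_thirds_le hv with hv3 | hv3
  · calc cantorMeasure.real (Icc u v) = cantorMeasure.real (Icc (3 * u) (3 * v)) / 2 :=
          hK.cantorMeasure_real_Icc_of_le_third hv3
      _ ≤ ((3 * v - 3 * u) ^ s + ε) / 2 := by
          gcongr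
          exact ih _ (hK.three_mul_mem hu (by linarith)) _ (hK.three_mul_mem hv hv3) (by linarith)
      _ = (v - u) ^ s + ε / 2 := by rw [hscale]; ring
  rcases hK.le_third_or_two_thirds_le hu with hu3 | hu3
  -- Here the error term would not be halved, so the error-free end estimates are used instead.
  · have hgap := rpow_add_rpow_le_of_gap (nonneg_of_three_rpow_eq_two h3s)
      (le_one_of_three_rpow_eq_two h3s) hu0 hu3 hv3 hv1
    calc cantorMeasure.real (Icc u v)
        ≤ (cantorMeasure.real (Icc (3 * u) 1) + cantorMeasure.real (Icc 0 (3 * v - 2))) / 2 :=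
          hK.cantorMeasure_real_Icc_le u v
      _ ≤ ((1 - 3 * u) ^ s + (3 * v - 2) ^ s) / 2 := by
          gcongr
          · exact hK.cantorMeasure_real_Icc_one_le h3s (hK.three_mul_mem hu hu3)
          · exact hK.cantorMeasure_real_zero_Icc_le h3s (hK.three_mul_sub_two_mem hv hv3)
      _ ≤ (v - u) ^ s + ε / 2 := by linarith
  · calc cantorMeasure.real (Icc u v) = cantorMeasure.real (Icc (3 * u - 2) (3 * v - 2)) / 2 :=
          hK.cantorMeasure_real_Icc_of_two_thirds_le hu3
      _ ≤ ((3 * v - 2 - (3 * u - 2)) ^ s + ε) / 2 := by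
          gcongr
          exact ih _ (hK.three_mul_sub_two_mem hu hu3) _
            (hK.three_mul_sub_two_mem hv (by linarith)) (by linarith)
      _ = (v - u) ^ s + ε / 2 := by rw [sub_sub_sub_cancel_right, hscale]; ring

lemma cantorMeasure_real_Icc_le_rpow {u v : ℝ} (hu : u ∈ K) (hv : v ∈ K) (huv : u ≤ v) :
    cantorMeasure.real (Icc u v) ≤ (v - u) ^ s := by
  refine forall_le_of_halving_error (S := {p : ℝ × ℝ | p.1 ∈ K ∧ p.2 ∈ K ∧ p.1 ≤ p.2})
    (a := fun p => cantorMeasure.real (Icc p.1 p.2)) (b := fun p => (p.2 - p.1) ^ s)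
    (fun p hp => ?_) (fun ε hε ih p hp => ?_) (u, v) ⟨hu, hv, huv⟩
  · linarith [measureReal_le_one (μ := cantorMeasure) (s := Icc p.1 p.2),
      Real.rpow_nonneg (sub_nonneg.2 hp.2.2) s]
  · exact hK.cantorMeasure_real_Icc_le_rpow_add_half h3s hε
      (fun u hu v hv huv => ih (u, v) ⟨hu, hv, huv⟩) hp.1 hp.2.1 hp.2.2

lemma cantorMeasure_le_ediam_rpow (U : Set ℝ) : cantorMeasure U ≤ Metric.ediam U ^ s := by
  have hs0 := nonneg_of_three_rpow_eq_two h3s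
  rw [← measure_inter_conull hK.cantorMeasure_compl]
  rcases (U ∩ K).eq_empty_or_nonempty with hempty | hne
  · simp [hempty]
  have hbdd : Bornology.IsBounded (U ∩ K) := hK.isCompact.isBounded.subset inter_subset_right
  have hclosure : closure (U ∩ K) ⊆ K := hK.isClosed.closure_subset_iff.2 inter_subset_right
  set a := sInf (U ∩ K)
  set b := sSup (U ∩ K)
  have haK : a ∈ K := hclosure (csInf_mem_closure hne hbdd.bddBelow)
  have hbK : b ∈ K := hclosure (csSup_mem_closure hne hbdd.bddAbove)
  have hab : a ≤ b := csInf_le_csSup hne hbdd.bddBelow hbdd.bddAbove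
  calc cantorMeasure (U ∩ K) ≤ cantorMeasure (Icc a b) := measure_mono hbdd.subset_Icc_sInf_sSup
    _ = ENNReal.ofReal (cantorMeasure.real (Icc a b)) := (ofReal_measureReal).symm
    _ ≤ ENNReal.ofReal ((b - a) ^ s) :=
        ENNReal.ofReal_le_ofReal (hK.cantorMeasure_real_Icc_le_rpow h3s haK hbK hab)
    _ = Metric.ediam (U ∩ K) ^ s := by
        rw [Real.ediam_eq hbdd, ENNReal.ofReal_rpow_of_nonneg (sub_nonneg.2 hab) hs0]
    _ ≤ Metric.ediam U ^ s := by gcongr; exact inter_subset_left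

lemma one_le_hausdorffMeasure : 1 ≤ μH[s] K := by
  have hK1 : cantorMeasure K = 1 := by
    rw [← measure_univ (μ := cantorMeasure), ← univ_inter K,
      measure_inter_conull hK.cantorMeasure_compl]
  calc 1 = cantorMeasure K := hK1.symm
    _ ≤ μH[s] K := Measure.le_hausdorffMeasure s cantorMeasure 1 one_pos
        (fun U _ => hK.cantorMeasure_le_ediam_rpow h3s U) K

end IsCantorAttractor

/-- **Example.** Let `K` be the unique nonempty compact subset of `ℝ` satisfying
`3·K = K ∪ (K + 2)` (the classical middle-thirds Cantor set). Then `H^s(K) = 1`, where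
`s = log 2 / log 3`. -/
theorem hausdorff_measure_middle_thirds (K : Set ℝ) (hKc : IsCompact K) (hKne : K.Nonempty)
    (hK : (fun x => (3 : ℝ) * x) '' K = K ∪ (fun x => x + 2) '' K)
    (s : ℝ) (hs : s = Real.log 2 / Real.log 3) :
    Measure.hausdorffMeasure s K = 1 := by
  have hattr : IsCantorAttractor K := ⟨hKc, hKne, hK⟩
  have h3s : (3 : ℝ) ^ s = 2 := hs ▸ Real.rpow_logb (by norm_num) (by norm_num) (by norm_num)
  exact le_antisymm (hattr.hausdorffMeasure_le_one h3s) (hattr.one_le_hausdorffMeasure h3s)
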